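/- Let n ≥ 1, let A_n be the matrix indexed by functions Fin n → Fin d × (Fin d × Fin d) with entries A_n[x,y] = ∏_t A[x t, y t] (the n-fold tensor power of A), and let C_n be the matrix on the same index type with entries C_n[x,y] = ∏_t (I_d ⊗ₖ (I − Φ))[x t, y t]. Then A_n is positive semidefinite and A_n − (d/(d+1))^n • C_n is positive semidefinite. -/

import Mathlib

open Matrix Kronecker ComplexOrder

/-- Projector onto the maximally entangled state: Φ[(i,j),(k,l)] = 1/d if i=j and k=l. -/
noncomputable def Phi (d : ℕ) : Matrix (Fin d × Fin d) (Fin d × Fin d) ℂ :=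
  fun p q => if p.1 = p.2 ∧ q.1 = q.2 then ((d : ℂ))⁻¹ else 0

/-- Coefficients a i k: 1 on the diagonal, -1/(d²-1) off the diagonal. -/
noncomputable def aCoef (d : ℕ) (i k : Fin d) : ℝ :=
  if i = k then 1 else -1 / ((d : ℝ) ^ 2 - 1)

/-- The matrix A = Σ_{i,k} E_{ik} ⊗ₖ (a i k • (I − Φ) + Φ). -/
noncomputable def Amat (d : ℕ) : Matrix (Fin d × (Fin d × Fin d)) (Fin d × (Fin d × Fin d)) ℂ :=
  ∑ i : Fin d, ∑ k : Fin d,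
    (Matrix.single i k (1 : ℂ)) ⊗ₖ
      (aCoef d i k • ((1 : Matrix (Fin d × Fin d) (Fin d × Fin d) ℂ) - Phi d) + Phi d)

/-- The n-fold tensor (Kronecker) power of A. -/
noncomputable def AmatPow (d n : ℕ) :
    Matrix (Fin n → Fin d × (Fin d × Fin d)) (Fin n → Fin d × (Fin d × Fin d)) ℂ :=
  fun x y => ∏ t : Fin n, Amat d (x t) (y t)

/-- The n-fold tensor power of I_d ⊗ₖ (I − Φ). -/
noncomputable def Cmat (d n : ℕ) :
    Matrix (Fin n → Fin d × (Fin d × Fin d)) (Fin n → Fin d × (Fin d × Fin d)) ℂ :=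
  fun x y => ∏ t : Fin n,
    ((1 : Matrix (Fin d) (Fin d) ℂ) ⊗ₖ
      ((1 : Matrix (Fin d × Fin d) (Fin d × Fin d) ℂ) - Phi d)) (x t) (y t)

/-!
Write `A = M ⊗ₖ (1 - Φ) + J ⊗ₖ Φ`, where `M = (a i k)` and `J` is the all-ones matrix.
With `c = d / (d + 1)` one has `M = c • 1 + (d² - 1)⁻¹ • (d • 1 - J)`, and `d • 1 - J`, `1 - Φ`,
`J`, `Φ` are positive semidefinite because `Φ` and `J / d` are rank-one projections.
Hence `0 ≤ c • (1 ⊗ₖ (1 - Φ)) ≤ A` in the Loewner order. Finally, the `n`-fold Kronecker power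
is monotone on positive semidefinite matrices: expanding `∏ₜ (Y + (A - Y))` writes `A^⊗n` as
`Y^⊗n` plus Kronecker products of positive semidefinite factors.
-/

open scoped MatrixOrder

namespace Matrix

section piKronecker

variable {κ l m n R : Type*} [Fintype κ]

def piKronecker [CommMonoid R] (M : κ → Matrix m n R) : Matrix (κ → m) (κ → n) R :=
  of fun x y => ∏ t, M t (x t) (y t)

@[simp]
lemma piKronecker_apply [CommMonoid R] (M : κ → Matrix m n R) (x : κ → m) (y : κ → n) :
    piKronecker M x y = ∏ t, M t (x t) (y t) := rfl

lemma piKronecker_mul [DecidableEq κ] [CommSemiring R] [Fintype m] (M : κ → Matrix l m R)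
    (N : κ → Matrix m n R) :
    piKronecker (fun t => M t * N t) = piKronecker M * piKronecker N := by
  ext x y
  simp only [piKronecker_apply, mul_apply, Finset.prod_univ_sum, Fintype.piFinset_univ,
    Finset.prod_mul_distrib]

lemma conjTranspose_piKronecker [CommSemiring R] [StarRing R] (M : κ → Matrix m n R) :
    (piKronecker M)ᴴ = piKronecker fun t => (M t)ᴴ := by
  ext x y
  simp [star_prod]

lemma piKronecker_smul {S : Type*} [CommMonoid R] [CommMonoid S] [MulAction S R]
    [IsScalarTower S R R] [SMulCommClass S R R] (c : κ → S) (M : κ → Matrix m n R) :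
    piKronecker (fun t => c t • M t) = (∏ t, c t) • piKronecker M := by
  ext x y
  simp [Finset.prod_smul]

lemma piKronecker_add [DecidableEq κ] [CommSemiring R] (M N : κ → Matrix m n R) :
    piKronecker (fun t => M t + N t) =
      ∑ s ∈ Finset.univ.powerset, piKronecker fun t => if t ∈ s then M t else N t := by
  ext x y
  simp only [piKronecker_apply, add_apply, sum_apply, Finset.prod_add]
  refine Finset.sum_congr rfl fun s _ => ?_
  rw [← Finset.prod_mul_prod_compl s, Finset.compl_eq_univ_sdiff]
  congr 1 <;> refine Finset.prod_congr rfl fun t ht => ?_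
  · rw [if_pos ht]
  · rw [if_neg (Finset.mem_sdiff.mp ht).2]

variable {𝕜 : Type*} [RCLike 𝕜] [Fintype n] [DecidableEq κ]

lemma PosSemidef.piKronecker {M : κ → Matrix n n 𝕜} (hM : ∀ t, (M t).PosSemidef) :
    (piKronecker M).PosSemidef := by
  classical
  choose B hB using fun t => CStarAlgebra.nonneg_iff_eq_star_mul_self.mp (hM t).nonneg
  have hgram : Matrix.piKronecker M = (Matrix.piKronecker B)ᴴ * Matrix.piKronecker B := by
    rw [conjTranspose_piKronecker, ← piKronecker_mul]
    exact congrArg _ (funext hB)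
  rw [hgram]
  exact posSemidef_conjTranspose_mul_self _

lemma piKronecker_mono {M N : κ → Matrix n n 𝕜} (hN : ∀ t, 0 ≤ N t) (hNM : ∀ t, N t ≤ M t) :
    piKronecker N ≤ piKronecker M := by
  have hM : M = fun t => (M t - N t) + N t := by simp
  rw [hM, piKronecker_add]
  convert Finset.single_le_sum (f := fun s => piKronecker fun t => if t ∈ s then M t - N t else N t)
    (fun s _ => ?_) (Finset.empty_mem_powerset Finset.univ)
  · simp
  · refine (PosSemidef.piKronecker fun t => ?_).nonneg
    split_ifs
    exacts [hNM t, (hN t).posSemidef]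

end piKronecker

section vecMulVec

variable {n : Type*} [Fintype n]

lemma isStarProjection_inv_dotProduct_smul_vecMulVec {K : Type*} [Field K] [StarRing K]
    {v : n → K} (hv : star v ⬝ᵥ v ≠ 0) :
    IsStarProjection ((star v ⬝ᵥ v)⁻¹ • vecMulVec v (star v)) := by
  have hself : star (star v ⬝ᵥ v) = star v ⬝ᵥ v := (star_dotProduct v v).symm
  constructor
  · rw [IsIdempotentElem, smul_mul_smul_comm, vecMulVec_mul_vecMulVec, vecMulVec_smul,
      smul_smul, mul_assoc, inv_mul_cancel₀ hv, mul_one]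
  · rw [IsSelfAdjoint, star_smul, star_inv₀, hself, star_eq_conjTranspose,
      conjTranspose_vecMulVec, star_star]

lemma posSemidef_dotProduct_smul_one_sub_vecMulVec {𝕜 : Type*} [RCLike 𝕜] [DecidableEq n]
    (v : n → 𝕜) : ((star v ⬝ᵥ v) • (1 : Matrix n n 𝕜) - vecMulVec v (star v)).PosSemidef := by
  by_cases hv : star v ⬝ᵥ v = 0
  · simpa [dotProduct_star_self_eq_zero.mp hv] using PosSemidef.zero
  · have hP := isStarProjection_inv_dotProduct_smul_vecMulVec hv
    have : (star v ⬝ᵥ v) • (1 : Matrix n n 𝕜) - vecMulVec v (star v) =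
        (star v ⬝ᵥ v) • (1 - (star v ⬝ᵥ v)⁻¹ • vecMulVec v (star v)) := by
      rw [smul_sub, smul_smul, mul_inv_cancel₀ hv, one_smul]
    rw [this]
    exact hP.one_sub_nonneg.posSemidef.smul (dotProduct_star_self_nonneg v)

end vecMulVec

end Matrix

-- `√d • φ`, for the maximally entangled unit vector `φ`.
def diagIndicator (d : ℕ) : Fin d × Fin d → ℂ := fun p => if p.1 = p.2 then 1 else 0

lemma star_diagIndicator_dotProduct (d : ℕ) :
    star (diagIndicator d) ⬝ᵥ diagIndicator d = d := by
  simp [dotProduct, diagIndicator, Fintype.sum_prod_type]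

lemma Phi_eq_smul_vecMulVec (d : ℕ) :
    Phi d = (d : ℂ)⁻¹ • vecMulVec (diagIndicator d) (star (diagIndicator d)) := by
  ext p q
  by_cases hp : p.1 = p.2 <;> by_cases hq : q.1 = q.2 <;>
    simp [Phi, diagIndicator, vecMulVec_apply, hp, hq]

lemma isStarProjection_Phi {d : ℕ} (hd : d ≠ 0) : IsStarProjection (Phi d) := by
  have h := star_diagIndicator_dotProduct d
  rw [Phi_eq_smul_vecMulVec, ← h]
  exact isStarProjection_inv_dotProduct_smul_vecMulVec (h ▸ Nat.cast_ne_zero.mpr hd)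

noncomputable def aCoefMatrix (d : ℕ) : Matrix (Fin d) (Fin d) ℂ := of fun i k => aCoef d i k

lemma Amat_eq_kronecker_add_kronecker (d : ℕ) :
    Amat d = aCoefMatrix d ⊗ₖ (1 - Phi d) + vecMulVec 1 1 ⊗ₖ Phi d := by
  ext ⟨i, p⟩ ⟨k, q⟩
  simp [Amat, Matrix.sum_apply, single_apply, aCoefMatrix, ite_and]

lemma aCoefMatrix_eq_smul_one_add {d : ℕ} (hd : d ≠ 1) :
    aCoefMatrix d =
      ((d : ℝ) / (d + 1)) • 1 + ((d : ℝ) ^ 2 - 1)⁻¹ • ((d : ℂ) • 1 - vecMulVec 1 1) := by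
  have hd1 : (d : ℂ) + 1 ≠ 0 := Nat.cast_add_one_ne_zero d
  have hd2 : (d : ℂ) ^ 2 - 1 ≠ 0 := by
    rw [show (d : ℂ) ^ 2 - 1 = (d - 1) * (d + 1) by ring]
    exact mul_ne_zero (sub_ne_zero.mpr (Nat.cast_ne_one.mpr hd)) hd1
  ext i k
  by_cases h : i = k
  · have hdiag : (1 : ℂ) = d / (d + 1) + ((d : ℂ) ^ 2 - 1)⁻¹ * (d - 1) := by
      field_simp
      ring
    simpa [aCoefMatrix, aCoef, h, one_apply] using hdiag
  · simp [aCoefMatrix, aCoef, h, one_apply, div_eq_mul_inv]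

lemma smul_one_kronecker_le_Amat {d : ℕ} (hd : 2 ≤ d) :
    ((d : ℝ) / (d + 1)) • ((1 : Matrix (Fin d) (Fin d) ℂ) ⊗ₖ (1 - Phi d)) ≤ Amat d := by
  have hΦ := isStarProjection_Phi (d := d) (by omega)
  have hdJ : ((d : ℂ) • 1 - vecMulVec 1 1 : Matrix (Fin d) (Fin d) ℂ).PosSemidef := by
    simpa using posSemidef_dotProduct_smul_one_sub_vecMulVec (1 : Fin d → ℂ)
  have hcoef : (0 : ℝ) ≤ ((d : ℝ) ^ 2 - 1)⁻¹ := by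
    have : (2 : ℝ) ≤ d := by exact_mod_cast hd
    exact inv_nonneg.mpr (by nlinarith)
  have hJ : (vecMulVec (1 : Fin d → ℂ) 1).PosSemidef := by
    simpa using posSemidef_vecMulVec_self_star (1 : Fin d → ℂ)
  rw [le_iff, ← smul_kronecker, Amat_eq_kronecker_add_kronecker,
    aCoefMatrix_eq_smul_one_add (by omega), add_kronecker, add_assoc, add_sub_cancel_left]
  exact ((hdJ.smul hcoef).kronecker hΦ.one_sub_nonneg.posSemidef).add
    (hJ.kronecker hΦ.nonneg.posSemidef)

theorem stmt_7_general (d n : ℕ) (hd : 2 ≤ d) :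
    (AmatPow d n).PosSemidef ∧
      (AmatPow d n - (((d : ℝ) / ((d : ℝ) + 1)) ^ n) • Cmat d n).PosSemidef := by
  set c : ℝ := (d : ℝ) / ((d : ℝ) + 1)
  have hA : c • ((1 : Matrix (Fin d) (Fin d) ℂ) ⊗ₖ (1 - Phi d)) ≤ Amat d :=
    smul_one_kronecker_le_Amat hd
  have hC : 0 ≤ c • ((1 : Matrix (Fin d) (Fin d) ℂ) ⊗ₖ (1 - Phi d)) :=
    ((PosSemidef.one.kronecker (isStarProjection_Phi (by omega)).one_sub_nonneg.posSemidef).smul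
      (by positivity)).nonneg
  have hCmat : c ^ n • Cmat d n = piKronecker fun _ : Fin n => c • (1 ⊗ₖ (1 - Phi d)) := by
    rw [piKronecker_smul, Finset.prod_const, Finset.card_univ, Fintype.card_fin]
    rfl
  constructor
  · exact PosSemidef.piKronecker fun _ => (hC.trans hA).posSemidef
  · rw [hCmat]
    exact piKronecker_mono (fun _ => hC) (fun _ => hA)

/-- A_n is PSD and dominates (d/(d+1))^n • C_n in the Loewner order. -/
theorem stmt_7 (d n : ℕ) (hd : 2 ≤ d) (hn : 1 ≤ n) :
    (AmatPow d n).PosSemidef ∧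
      (AmatPow d n - (((d : ℝ) / ((d : ℝ) + 1)) ^ n) • Cmat d n).PosSemidef :=
  stmt_7_general d n hd
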